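/- Let n ≥ 1, let v = (v_1,…,v_n) ∈ ℂ^n have pairwise distinct entries, let α_0,…,α_n : ℂ → ℂ be polynomial functions, and set Y(z, x) := Σ_{p=0}^{n} α_p(z) σ_p(x) for z ∈ ℂ and n-tuples x. Fix k and assume the Bethe equation Y(v_k, v) = 0 holds. Then: (a) for every j ≠ k, g(v_k,v_j) · Y(v_k, v^{(j→v_k)}) = c · Σ_{p=0}^{n} α_p(v_k) σ_{p−1}(v̂_j); and (b) lim_{u→v_k} g(u,v_k) · Y(u, v^{(k→u)}) = c · ( Σ_{p=0}^{n} α_p′(v_k) σ_p(v) + Σ_{p=0}^{n} α_p(v_k) σ_{p−1}(v̂_k) ). Here v^{(j→t)} is the n-tuple obtained from v by replacing v_j with t, and v̂_j is the (n−1)-tuple v with v_j omitted. In particular, under the Bethe equations the entries of the matrix Ω_{jk} = g(u_k,v_j) Y(u_k, v^{(j→u_k)}) tend, as u_k → v_k, to c times the corresponding Gaudin-matrix entries. -/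

import Mathlib

/-!
Replacing the entry `v_j` by `t` changes each elementary symmetric function affinely in `t`:
`σ_p(v^{(j→t)}) = σ_p(v) + (t - v_j) σ_{p-1}(v̂_j)`. Hence
`Y(u, v^{(j→t)}) = Y(u, v) + (t - v_j) ∑_p α_p(u) σ_{p-1}(v̂_j)`, and the first term vanishes
at `u = v_k` by the Bethe equation. For `j ≠ k` the factor `v_k - v_j` cancels the pole of `g`;
for `j = k` the function `u ↦ Y(u, v^{(k→u)})` vanishes at `v_k`, so `g(u, v_k) Y(u, v^{(k→u)})`
is `c` times a difference quotient of it and tends to `c` times its derivative.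
-/

/-- `g c x y = c / (x - y)`. -/
noncomputable def g (c x y : ℂ) : ℂ := c / (x - y)

/-- `esym w p` is the `p`-th elementary symmetric polynomial of the entries of `w`;
it equals `1` for `p = 0` and `0` for `p` larger than the number of entries. -/
noncomputable def esym {m : ℕ} (w : Fin m → ℂ) (p : ℕ) : ℂ :=
  ∑ s ∈ Finset.powersetCard p Finset.univ, ∏ i ∈ s, w i

/-- `esymZ w p` extends `esym` to integer indices, vanishing for `p < 0`. -/
noncomputable def esymZ {m : ℕ} (w : Fin m → ℂ) (p : ℤ) : ℂ :=
  if 0 ≤ p then esym w p.toNat else 0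

open Filter Topology

theorem Multiset.esymm_cons_succ {R : Type*} [CommSemiring R] (a : R) (s : Multiset R)
    (n : ℕ) : (a ::ₘ s).esymm (n + 1) = s.esymm (n + 1) + a * s.esymm n := by
  simp only [Multiset.esymm, Multiset.powersetCard_cons, Multiset.map_add, Multiset.sum_add,
    Multiset.map_map, Function.comp_def, Multiset.prod_cons, Multiset.sum_map_mul_left]

theorem esym_eq_esymm {m : ℕ} (w : Fin m → ℂ) (p : ℕ) :
    esym w p = (Finset.univ.val.map w).esymm p :=
  (Finset.esymm_map_val w _ p).symm

theorem esym_update_eq_add_mul {m : ℕ} (v : Fin (m + 1) → ℂ) (j : Fin (m + 1)) (t : ℂ)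
    (p : ℕ) : esym (Function.update v j t) p
      = esym (v ∘ j.succAbove) p + t * esymZ (v ∘ j.succAbove) ((p : ℤ) - 1) := by
  have hmap : Finset.univ.val.map (Function.update v j t)
      = t ::ₘ Finset.univ.val.map (v ∘ j.succAbove) := by
    rw [Fin.univ_succAbove m j, Finset.cons_val, Multiset.map_cons, Finset.map_val,
      Multiset.map_map, Function.update_self]
    congr 1
    refine Multiset.map_congr rfl fun i _ => ?_
    exact Function.update_of_ne (Fin.succAbove_ne j i) t v
  rw [esym_eq_esymm, esym_eq_esymm, hmap]
  cases p with
  | zero => simp [esymZ, Multiset.esymm, Multiset.powersetCard_zero_left]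
  | succ q =>
    rw [Multiset.esymm_cons_succ, esymZ, if_pos (by omega), esym_eq_esymm]
    congr 3
    omega

theorem esym_update_eq_esym_add {m : ℕ} (v : Fin (m + 1) → ℂ) (j : Fin (m + 1)) (t : ℂ)
    (p : ℕ) : esym (Function.update v j t) p
      = esym v p + (t - v j) * esymZ (v ∘ j.succAbove) ((p : ℤ) - 1) := by
  have hself := esym_update_eq_add_mul v j (v j) p
  rw [Function.update_eq_self] at hself
  rw [esym_update_eq_add_mul, hself]
  ring

theorem sum_mul_esym_update {m N : ℕ} (a : Fin N → ℂ) (v : Fin (m + 1) → ℂ)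
    (j : Fin (m + 1)) (t : ℂ) :
    ∑ p : Fin N, a p * esym (Function.update v j t) p
      = ∑ p : Fin N, a p * esym v p
        + (t - v j) * ∑ p : Fin N, a p * esymZ (v ∘ j.succAbove) ((p : ℤ) - 1) := by
  simp only [esym_update_eq_esym_add, mul_add, Finset.sum_add_distrib, Finset.mul_sum]
  congr 1
  exact Finset.sum_congr rfl fun p _ => by ring

theorem hasDerivAt_sum_mul_esym_update {m N : ℕ} {a : Fin N → ℂ → ℂ}
    (v : Fin (m + 1) → ℂ) (j : Fin (m + 1)) (ha : ∀ p, DifferentiableAt ℂ (a p) (v j)) :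
    HasDerivAt (fun u => ∑ p : Fin N, a p u * esym (Function.update v j u) p)
      ((∑ p : Fin N, deriv (a p) (v j) * esym v p)
        + ∑ p : Fin N, a p (v j) * esymZ (v ∘ j.succAbove) ((p : ℤ) - 1)) (v j) := by
  simp only [sum_mul_esym_update]
  have hY : HasDerivAt (fun u => ∑ p : Fin N, a p u * esym v p)
      (∑ p : Fin N, deriv (a p) (v j) * esym v p) (v j) :=
    HasDerivAt.fun_sum fun p _ => (ha p).hasDerivAt.mul_const _
  have hS : DifferentiableAt ℂ
      (fun u => ∑ p : Fin N, a p u * esymZ (v ∘ j.succAbove) ((p : ℤ) - 1)) (v j) :=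
    DifferentiableAt.fun_sum fun p _ => (ha p).mul_const _
  simpa using hY.fun_add (((hasDerivAt_id' (v j)).sub_const (v j)).fun_mul hS.hasDerivAt)

theorem tendsto_g_mul_of_hasDerivAt {f : ℂ → ℂ} {f' x : ℂ} (hf : HasDerivAt f f' x)
    (hfx : f x = 0) (c : ℂ) :
    Tendsto (fun u => g c u x * f u) (𝓝[≠] x) (𝓝 (c * f')) := by
  refine ((hasDerivAt_iff_tendsto_slope.mp hf).const_mul c).congr' ?_
  filter_upwards [self_mem_nhdsWithin] with u hu
  rw [slope_def_field, hfx, sub_zero, g, mul_div_assoc', div_mul_eq_mul_div]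

theorem Omega_entries_Gaudin_limit_general (c : ℂ) (m : ℕ)
    (v : Fin (m + 1) → ℂ) (hv : Function.Injective v)
    (α : Fin (m + 2) → ℂ → ℂ)
    (hα : ∀ p : Fin (m + 2), ∃ q : Polynomial ℂ, α p = fun z => q.eval z)
    (k : Fin (m + 1))
    (hBethe : ∑ p : Fin (m + 2), α p (v k) * esym v (p : ℕ) = 0) :
    (∀ j : Fin (m + 1), j ≠ k →
      g c (v k) (v j) *
          (∑ p : Fin (m + 2), α p (v k) * esym (Function.update v j (v k)) (p : ℕ))
        = c * ∑ p : Fin (m + 2), α p (v k) * esymZ (v ∘ j.succAbove) ((p : ℤ) - 1)) ∧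
    Filter.Tendsto
      (fun u : ℂ => g c u (v k) *
        (∑ p : Fin (m + 2), α p u * esym (Function.update v k u) (p : ℕ)))
      (nhdsWithin (v k) {v k}ᶜ)
      (nhds (c * ((∑ p : Fin (m + 2), deriv (α p) (v k) * esym v (p : ℕ)) +
        ∑ p : Fin (m + 2), α p (v k) * esymZ (v ∘ k.succAbove) ((p : ℤ) - 1)))) := by
  refine ⟨fun j hjk => ?_, ?_⟩
  · have hvkj : v k - v j ≠ 0 := sub_ne_zero.mpr fun h => hjk (hv h).symm
    rw [sum_mul_esym_update, hBethe, zero_add, g, ← mul_assoc, div_mul_cancel₀ c hvkj]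
  · have hα' : ∀ p, DifferentiableAt ℂ (α p) (v k) := fun p => by
      obtain ⟨q, hq⟩ := hα p
      exact hq ▸ q.differentiableAt
    have hBethe' :
        ∑ p : Fin (m + 2), α p (v k) * esym (Function.update v k (v k)) (p : ℕ) = 0 := by
      rwa [Function.update_eq_self]
    exact tendsto_g_mul_of_hasDerivAt (hasDerivAt_sum_mul_esym_update v k hα') hBethe' c

/-- behaviour of the entries `Ω_{jk} = g(u_k,v_j) Y(u_k, v^{(j→u_k)})` as
`u_k → v_k`, under the Bethe equation `Y(v_k, v) = 0`.  Here the number of Bethe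
parameters is `n = m + 1 ≥ 1`, `Y(z, x) = ∑_{p=0}^{n} α_p(z) σ_p(x)`:
(a) the off-diagonal entries evaluated at `u_k = v_k`, and (b) the diagonal limit. -/
theorem Omega_entries_Gaudin_limit (c : ℂ) (hc : c ≠ 0) (m : ℕ)
    (v : Fin (m + 1) → ℂ) (hv : Function.Injective v)
    (α : Fin (m + 2) → ℂ → ℂ)
    (hα : ∀ p : Fin (m + 2), ∃ q : Polynomial ℂ, α p = fun z => q.eval z)
    (k : Fin (m + 1))
    (hBethe : ∑ p : Fin (m + 2), α p (v k) * esym v (p : ℕ) = 0) :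
    (∀ j : Fin (m + 1), j ≠ k →
      g c (v k) (v j) *
          (∑ p : Fin (m + 2), α p (v k) * esym (Function.update v j (v k)) (p : ℕ))
        = c * ∑ p : Fin (m + 2), α p (v k) * esymZ (v ∘ j.succAbove) ((p : ℤ) - 1)) ∧
    Filter.Tendsto
      (fun u : ℂ => g c u (v k) *
        (∑ p : Fin (m + 2), α p u * esym (Function.update v k u) (p : ℕ)))
      (nhdsWithin (v k) {v k}ᶜ)
      (nhds (c * ((∑ p : Fin (m + 2), deriv (α p) (v k) * esym v (p : ℕ)) +
        ∑ p : Fin (m + 2), α p (v k) * esymZ (v ∘ k.succAbove) ((p : ℤ) - 1)))) :=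
  Omega_entries_Gaudin_limit_general c m v hv α hα k hBethe
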